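/- Let h be a positive, decreasing, integrable function on [0,1], extended by 0 to [1,π], and define A_h(r) = (1−r)·(1/2π)∫_{−π}^{π} P_r(t) h(|t|) dt where P_r is the Poisson kernel. Then (1/2π)∫_0^{1−r} h(t) dt ≤ A_h(r) ≤ ((2+π)/π)∫_0^{1−r} h(t) dt for all 0 ≤ r < 1. -/

import Mathlib

/-!
Write `a = 1 - r`. The Poisson kernel is even, so `A_h(r) = (a / π) ∫₀^π P_r h`, and `h` vanishes
on `[1, π]`. Writing the denominator of `P_r(t)` as `a² + 2r(1 - cos t)` gives
`1/a ≤ P_r(t) ≤ 2/a` for `0 ≤ t ≤ a`: this is the lower bound, and it bounds the part of the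
integral over `[0, a]` by `(2/a) ∫₀^a h`. On `[a, 1]`, the Taylor estimate
`1 - cos t ≥ t²/2 - 5t⁴/96 ≥ (43/96) t²` gives
`P_r(t) ≤ 48 (1 - r²) / (43 r t²)`, whose integral over `[a, 1]` is `48 (1 + r) / 43`; since
`h ≤ h(a)` there and `a h(a) ≤ ∫₀^a h`, `a ∫ₐ¹ P_r h ≤ (96/43) ∫₀^a h`, and `96/43 < π`.
-/

open MeasureTheory Set

/-- `A_h(r) = (1−r)·(1/2π)∫_{−π}^{π} P_r(t) h(|t|) dt`, where
`P_r(t) = (1−r²)/(1−2r cos t + r²)` is the Poisson kernel. -/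
noncomputable def Ah (h : ℝ → ℝ) (r : ℝ) : ℝ :=
  (1 - r) * ((2 * Real.pi)⁻¹ * ∫ t in (-Real.pi)..Real.pi,
    ((1 - r ^ 2) / (1 - 2 * r * Real.cos t + r ^ 2)) * h |t|)

open Real intervalIntegral

theorem intervalIntegral.integral_comp_abs_of_nonneg {E : Type*} [NormedAddCommGroup E]
    [NormedSpace ℝ E] {f : ℝ → E} {c : ℝ} (hc : 0 ≤ c) (hf : IntervalIntegrable f volume 0 c) :
    ∫ x in -c..c, f |x| = (2 : ℝ) • ∫ x in 0..c, f x := by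
  have habs : EqOn (fun x ↦ f |x|) f (uIcc 0 c) := fun x hx ↦ by
    rw [uIcc_of_le hc] at hx
    simp [abs_of_nonneg hx.1]
  have hright : IntervalIntegrable (fun x ↦ f |x|) volume 0 c :=
    hf.congr (habs.mono Ioc_subset_Icc_self |>.symm)
  have hleft : IntervalIntegrable (fun x ↦ f |x|) volume (-c) 0 := by
    simpa using ((IntervalIntegrable.iff_comp_neg (by simp)).mp hright).symm
  have hneg : ∫ x in -c..0, f |x| = ∫ x in 0..c, f |x| := by
    simpa using (integral_comp_neg (a := 0) (b := c) (fun x ↦ f |x|)).symm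
  rw [← integral_add_adjacent_intervals hleft hright, hneg, integral_congr habs, two_smul]

theorem Real.mul_sq_le_one_sub_cos {x : ℝ} (hx : |x| ≤ 1) : 43 / 96 * x ^ 2 ≤ 1 - cos x := by
  have hcos := (abs_le.1 (cos_bound hx)).2
  have hx2 : x ^ 2 ≤ 1 := by rw [← sq_abs]; exact pow_le_one₀ (abs_nonneg x) hx
  have hx4 : |x| ^ 4 = x ^ 2 * x ^ 2 := by rw [show |x| ^ 4 = (|x| ^ 2) ^ 2 by ring, sq_abs]; ring
  nlinarith [sq_nonneg x]

/-- The Poisson kernel `P_r(t)` of the unit disc: Mathlib's `poissonKernel 0 r (exp (t * I))`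
in real coordinates. -/
noncomputable def diskPoissonKernel (r t : ℝ) : ℝ := (1 - r ^ 2) / (1 - 2 * r * cos t + r ^ 2)

lemma diskPoissonKernel_eq (r t : ℝ) :
    diskPoissonKernel r t = (1 - r ^ 2) / ((1 - r) ^ 2 + 2 * r * (1 - cos t)) := by
  rw [diskPoissonKernel]; ring_nf

lemma diskPoissonKernel_abs (r t : ℝ) : diskPoissonKernel r |t| = diskPoissonKernel r t := by
  rw [diskPoissonKernel, diskPoissonKernel, cos_abs]

section DiskPoissonKernel

variable {r : ℝ}

lemma sq_add_two_mul_one_sub_cos_pos (hr0 : 0 ≤ r) (hr1 : r < 1) (t : ℝ) :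
    0 < (1 - r) ^ 2 + 2 * r * (1 - cos t) := by
  have : 0 ≤ 2 * r * (1 - cos t) := by have := cos_le_one t; positivity
  nlinarith

lemma diskPoissonKernel_nonneg (hr0 : 0 ≤ r) (hr1 : r < 1) (t : ℝ) :
    0 ≤ diskPoissonKernel r t := by
  rw [diskPoissonKernel_eq]
  exact div_nonneg (by nlinarith) (sq_add_two_mul_one_sub_cos_pos hr0 hr1 t).le

lemma continuous_diskPoissonKernel (hr0 : 0 ≤ r) (hr1 : r < 1) :
    Continuous (diskPoissonKernel r) := by
  simp_rw [funext (diskPoissonKernel_eq r)]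
  exact continuous_const.div (by fun_prop) fun t ↦ (sq_add_two_mul_one_sub_cos_pos hr0 hr1 t).ne'

lemma diskPoissonKernel_le (hr0 : 0 ≤ r) (hr1 : r < 1) (t : ℝ) :
    diskPoissonKernel r t ≤ 2 / (1 - r) := by
  have hcos : 0 ≤ r * (1 - cos t) := mul_nonneg hr0 (by linarith [cos_le_one t])
  rw [diskPoissonKernel_eq,
    div_le_div_iff₀ (sq_add_two_mul_one_sub_cos_pos hr0 hr1 t) (by linarith)]
  nlinarith [mul_nonneg (sq_nonneg (1 - r)) hr0]

lemma one_div_le_diskPoissonKernel (hr0 : 0 ≤ r) (hr1 : r < 1) {t : ℝ} (ht : |t| ≤ 1 - r) :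
    1 / (1 - r) ≤ diskPoissonKernel r t := by
  have hcos : r * (1 - cos t) ≤ r * (t ^ 2 / 2) :=
    mul_le_mul_of_nonneg_left (by linarith [one_sub_sq_div_two_le_cos (x := t)]) hr0
  have ht2 : t ^ 2 ≤ (1 - r) ^ 2 := by rw [← sq_abs]; exact pow_le_pow_left₀ (abs_nonneg t) ht 2
  rw [diskPoissonKernel_eq,
    div_le_div_iff₀ (by linarith) (sq_add_two_mul_one_sub_cos_pos hr0 hr1 t)]
  nlinarith [mul_le_mul_of_nonneg_left ht2 hr0]

lemma diskPoissonKernel_le_mul_inv_sq (hr : 0 < r) (hr1 : r < 1) {t : ℝ} (ht0 : 0 < t)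
    (ht1 : t ≤ 1) :
    diskPoissonKernel r t ≤ 48 * (1 - r ^ 2) / (43 * r) * (t ^ 2)⁻¹ := by
  have hcos : 43 / 96 * t ^ 2 ≤ 1 - cos t := mul_sq_le_one_sub_cos (by rwa [abs_of_pos ht0])
  calc diskPoissonKernel r t ≤ (1 - r ^ 2) / (2 * r * (43 / 96 * t ^ 2)) := by
        rw [diskPoissonKernel_eq]
        refine div_le_div_of_nonneg_left (by nlinarith) (by positivity) ?_
        nlinarith [mul_le_mul_of_nonneg_left hcos hr.le]
    _ = 48 * (1 - r ^ 2) / (43 * r) * (t ^ 2)⁻¹ := by field_simp; ring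

lemma integral_diskPoissonKernel_le (hr0 : 0 ≤ r) (hr1 : r < 1) :
    ∫ t in (1 - r)..1, diskPoissonKernel r t ≤ 48 / 43 * (1 + r) := by
  rcases hr0.eq_or_lt with rfl | hr
  · norm_num
  have hpos : ∀ t ∈ uIcc (1 - r) 1, 0 < t := fun t ht ↦ by
    rw [uIcc_of_le (by linarith)] at ht; linarith [ht.1]
  have hinv : ∫ t in (1 - r)..1, (t ^ 2)⁻¹ = (1 - r)⁻¹ - 1 := by
    simp_rw [← zpow_natCast, ← zpow_neg]
    rw [integral_zpow (Or.inr ⟨by norm_num, fun h0 ↦ (hpos 0 h0).false⟩)]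
    norm_num
    ring
  calc ∫ t in (1 - r)..1, diskPoissonKernel r t
      ≤ ∫ t in (1 - r)..1, 48 * (1 - r ^ 2) / (43 * r) * (t ^ 2)⁻¹ := by
        refine integral_mono_on (by linarith)
          ((continuous_diskPoissonKernel hr0 hr1).intervalIntegrable _ _)
          (ContinuousOn.intervalIntegrable ?_) fun t ht ↦
            diskPoissonKernel_le_mul_inv_sq hr hr1 (by linarith [ht.1]) ht.2
        exact continuousOn_const.mul
          ((continuousOn_pow 2).inv₀ fun t ht ↦ (pow_pos (hpos t ht) 2).ne')
    _ = 48 / 43 * (1 + r) := by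
        have : 1 - r ≠ 0 := by linarith
        rw [intervalIntegral.integral_const_mul, hinv]
        field_simp
        ring

end DiskPoissonKernel

section DecreasingWeight

variable {h : ℝ → ℝ}

lemma nonneg_of_antitoneOn_of_eq_zero (hdec : AntitoneOn h (Icc 0 1))
    (hext : ∀ t : ℝ, 1 ≤ t → h t = 0) {t : ℝ} (ht : 0 ≤ t) : 0 ≤ h t := by
  rcases le_or_gt 1 t with h1 | h1
  · exact (hext t h1).ge
  · simpa [hext 1 le_rfl] using hdec ⟨ht, h1.le⟩ ⟨zero_le_one, le_rfl⟩ h1.le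

lemma mul_le_integral_of_antitoneOn (hdec : AntitoneOn h (Icc 0 1)) {a : ℝ} (ha0 : 0 ≤ a)
    (ha1 : a ≤ 1) (hint : IntervalIntegrable h volume 0 a) : a * h a ≤ ∫ t in 0..a, h t := by
  simpa [mul_comm] using integral_mono_on ha0 intervalIntegrable_const hint
    fun t ht ↦ hdec ⟨ht.1, ht.2.trans ha1⟩ ⟨ha0, ha1⟩ ht.2

lemma intervalIntegrable_of_eq_zero (hext : ∀ t : ℝ, 1 ≤ t → h t = 0)
    (hint : IntervalIntegrable h volume 0 1) {a b : ℝ} (ha : 0 ≤ a) (hb : 0 ≤ b) :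
    IntervalIntegrable h volume a b := by
  have hc : 1 ≤ max (max a b) 1 := le_max_right _ _
  have htail : IntervalIntegrable h volume 1 (max (max a b) 1) :=
    intervalIntegrable_const.congr fun t ht ↦ by
      rw [uIoc_of_le hc] at ht; exact (hext t ht.1.le).symm
  refine (hint.trans htail).mono_set (uIcc_subset_uIcc ?_ ?_) <;>
    rw [uIcc_of_le (zero_le_one.trans hc)] <;> constructor <;> simp [*]

variable {r : ℝ}

lemma Ah_eq (hr0 : 0 ≤ r) (hr1 : r < 1) (hext : ∀ t : ℝ, 1 ≤ t → h t = 0)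
    (hint : IntervalIntegrable h volume 0 1) :
    Ah h r = (1 - r) / π * ∫ t in 0..π, diskPoissonKernel r t * h t := by
  have hPh : IntervalIntegrable (fun t ↦ diskPoissonKernel r t * h t) volume 0 π :=
    (intervalIntegrable_of_eq_zero hext hint le_rfl pi_pos.le).continuousOn_mul
      (continuous_diskPoissonKernel hr0 hr1).continuousOn
  have heven := integral_comp_abs_of_nonneg pi_pos.le hPh
  simp only [diskPoissonKernel_abs, smul_eq_mul] at heven
  rw [Ah, show (fun t ↦ (1 - r ^ 2) / (1 - 2 * r * cos t + r ^ 2) * h |t|) =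
    fun t ↦ diskPoissonKernel r t * h |t| from rfl, heven]
  field_simp

lemma intervalIntegrable_diskPoissonKernel_mul (hr0 : 0 ≤ r) (hr1 : r < 1)
    (hext : ∀ t : ℝ, 1 ≤ t → h t = 0) (hint : IntervalIntegrable h volume 0 1) {a b : ℝ}
    (ha : 0 ≤ a) (hb : 0 ≤ b) :
    IntervalIntegrable (fun t ↦ diskPoissonKernel r t * h t) volume a b :=
  (intervalIntegrable_of_eq_zero hext hint ha hb).continuousOn_mul
    (continuous_diskPoissonKernel hr0 hr1).continuousOn

lemma integral_diskPoissonKernel_mul_eq_add (hr0 : 0 ≤ r) (hr1 : r < 1)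
    (hext : ∀ t : ℝ, 1 ≤ t → h t = 0) (hint : IntervalIntegrable h volume 0 1) :
    ∫ t in 0..π, diskPoissonKernel r t * h t =
      (∫ t in 0..(1 - r), diskPoissonKernel r t * h t) +
        ∫ t in (1 - r)..1, diskPoissonKernel r t * h t := by
  have hI {a b : ℝ} (ha : 0 ≤ a) (hb : 0 ≤ b) :=
    intervalIntegrable_diskPoissonKernel_mul hr0 hr1 hext hint ha hb
  have hvanish : ∫ t in 1..π, diskPoissonKernel r t * h t = 0 :=
    integral_zero_ae <| .of_forall fun t ht ↦ by
      rw [uIoc_of_le (by linarith [pi_gt_three])] at ht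
      rw [hext t ht.1.le, mul_zero]
  have ha : 0 ≤ 1 - r := by linarith
  rw [← integral_add_adjacent_intervals (hI le_rfl ha) (hI ha pi_pos.le),
    ← integral_add_adjacent_intervals (hI ha zero_le_one) (hI zero_le_one pi_pos.le), hvanish,
    add_zero]

lemma integral_le_mul_integral_diskPoissonKernel_mul (hr0 : 0 ≤ r) (hr1 : r < 1)
    (hdec : AntitoneOn h (Icc 0 1)) (hext : ∀ t : ℝ, 1 ≤ t → h t = 0)
    (hint : IntervalIntegrable h volume 0 1) :
    ∫ t in 0..(1 - r), h t ≤ (1 - r) * ∫ t in 0..π, diskPoissonKernel r t * h t := by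
  have ha : 0 < 1 - r := by linarith
  have hnn {t : ℝ} (ht : 0 ≤ t) : 0 ≤ h t := nonneg_of_antitoneOn_of_eq_zero hdec hext ht
  have hh := intervalIntegrable_of_eq_zero hext hint le_rfl ha.le
  have htail : 0 ≤ ∫ t in (1 - r)..1, diskPoissonKernel r t * h t :=
    integral_nonneg (by linarith) fun t ht ↦
      mul_nonneg (diskPoissonKernel_nonneg hr0 hr1 t) (hnn (ha.le.trans ht.1))
  have hhead : ∫ t in 0..(1 - r), h t ≤
      (1 - r) * ∫ t in 0..(1 - r), diskPoissonKernel r t * h t :=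
    calc ∫ t in 0..(1 - r), h t = (1 - r) * ∫ t in 0..(1 - r), 1 / (1 - r) * h t := by
          rw [intervalIntegral.integral_const_mul]; field_simp
      _ ≤ (1 - r) * ∫ t in 0..(1 - r), diskPoissonKernel r t * h t := by
          gcongr
          refine integral_mono_on ha.le (hh.const_mul _)
            (intervalIntegrable_diskPoissonKernel_mul hr0 hr1 hext hint le_rfl ha.le)
            fun t ht ↦ mul_le_mul_of_nonneg_right ?_ (hnn ht.1)
          exact one_div_le_diskPoissonKernel hr0 hr1 (by rw [abs_of_nonneg ht.1]; exact ht.2)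
  rw [integral_diskPoissonKernel_mul_eq_add hr0 hr1 hext hint]
  nlinarith

lemma integral_diskPoissonKernel_mul_le_of_antitoneOn (hr0 : 0 ≤ r) (hr1 : r < 1)
    (hdec : AntitoneOn h (Icc 0 1)) (hext : ∀ t : ℝ, 1 ≤ t → h t = 0)
    (hint : IntervalIntegrable h volume 0 1) :
    ∫ t in (1 - r)..1, diskPoissonKernel r t * h t ≤ h (1 - r) * (48 / 43 * (1 + r)) := by
  have ha : 0 ≤ 1 - r := by linarith
  calc ∫ t in (1 - r)..1, diskPoissonKernel r t * h t
      ≤ ∫ t in (1 - r)..1, h (1 - r) * diskPoissonKernel r t := by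
        refine integral_mono_on (by linarith)
          (intervalIntegrable_diskPoissonKernel_mul hr0 hr1 hext hint ha zero_le_one)
          (((continuous_diskPoissonKernel hr0 hr1).intervalIntegrable _ _).const_mul _)
          fun t ht ↦ ?_
        rw [mul_comm (h _)]
        exact mul_le_mul_of_nonneg_left (hdec ⟨ha, by linarith⟩ ⟨ha.trans ht.1, ht.2⟩ ht.1)
          (diskPoissonKernel_nonneg hr0 hr1 t)
    _ ≤ h (1 - r) * (48 / 43 * (1 + r)) := by
        rw [intervalIntegral.integral_const_mul]
        exact mul_le_mul_of_nonneg_left (integral_diskPoissonKernel_le hr0 hr1)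
          (nonneg_of_antitoneOn_of_eq_zero hdec hext ha)

lemma mul_integral_diskPoissonKernel_mul_le (hr0 : 0 ≤ r) (hr1 : r < 1)
    (hdec : AntitoneOn h (Icc 0 1)) (hext : ∀ t : ℝ, 1 ≤ t → h t = 0)
    (hint : IntervalIntegrable h volume 0 1) :
    (1 - r) * ∫ t in 0..π, diskPoissonKernel r t * h t ≤
      (2 + 96 / 43) * ∫ t in 0..(1 - r), h t := by
  have ha : 0 < 1 - r := by linarith
  have hnn {t : ℝ} (ht : 0 ≤ t) : 0 ≤ h t := nonneg_of_antitoneOn_of_eq_zero hdec hext ht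
  have hh := intervalIntegrable_of_eq_zero hext hint le_rfl ha.le
  have hhead : (1 - r) * ∫ t in 0..(1 - r), diskPoissonKernel r t * h t ≤
      2 * ∫ t in 0..(1 - r), h t :=
    calc (1 - r) * ∫ t in 0..(1 - r), diskPoissonKernel r t * h t
        ≤ (1 - r) * ∫ t in 0..(1 - r), 2 / (1 - r) * h t := by
          gcongr
          exact integral_mono_on ha.le
            (intervalIntegrable_diskPoissonKernel_mul hr0 hr1 hext hint le_rfl ha.le)
            (hh.const_mul _)
            fun t ht ↦ mul_le_mul_of_nonneg_right (diskPoissonKernel_le hr0 hr1 t) (hnn ht.1)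
      _ = 2 * ∫ t in 0..(1 - r), h t := by
          rw [intervalIntegral.integral_const_mul]; field_simp
  have htail := integral_diskPoissonKernel_mul_le_of_antitoneOn hr0 hr1 hdec hext hint
  have hmean := mul_le_integral_of_antitoneOn hdec ha.le (by linarith) hh
  rw [integral_diskPoissonKernel_mul_eq_add hr0 hr1 hext hint]
  nlinarith [mul_le_mul_of_nonneg_left htail ha.le,
    mul_nonneg (mul_nonneg ha.le (hnn ha.le)) ha.le]

end DecreasingWeight

theorem Ah_bounds_general (h : ℝ → ℝ)
    (hdec : AntitoneOn h (Set.Icc 0 1))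
    (hint : IntervalIntegrable h volume 0 1)
    (hext : ∀ t : ℝ, 1 ≤ t → h t = 0)
    (r : ℝ) (hr0 : 0 ≤ r) (hr1 : r < 1) :
    ((2 * Real.pi)⁻¹ * ∫ t in (0 : ℝ)..(1 - r), h t) ≤ Ah h r ∧
    Ah h r ≤ ((2 + Real.pi) / Real.pi) * ∫ t in (0 : ℝ)..(1 - r), h t := by
  set S := ∫ t in (0 : ℝ)..(1 - r), h t
  set T := ∫ t in 0..π, diskPoissonKernel r t * h t
  have hS : 0 ≤ S :=
    integral_nonneg (by linarith) fun t ht ↦ nonneg_of_antitoneOn_of_eq_zero hdec hext ht.1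
  have hlow : S ≤ (1 - r) * T :=
    integral_le_mul_integral_diskPoissonKernel_mul hr0 hr1 hdec hext hint
  have hup : (1 - r) * T ≤ (2 + 96 / 43) * S :=
    mul_integral_diskPoissonKernel_mul_le hr0 hr1 hdec hext hint
  rw [Ah_eq hr0 hr1 hext hint, div_mul_eq_mul_div, div_mul_eq_mul_div]
  constructor
  · calc (2 * π)⁻¹ * S = S / (2 * π) := by ring
      _ ≤ S / π := div_le_div_of_nonneg_left hS pi_pos (by linarith [pi_pos])
      _ ≤ (1 - r) * T / π := by gcongr
  · calc (1 - r) * T / π ≤ (2 + 96 / 43) * S / π := by gcongr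
      _ ≤ (2 + π) * S / π := by gcongr; linarith [pi_gt_three]

/-- If `h` is positive, decreasing and integrable on `[0,1]`, extended by `0` on `[1,π]`,
then `(1/2π)∫_0^{1−r} h ≤ A_h(r) ≤ ((2+π)/π)∫_0^{1−r} h` for `0 ≤ r < 1`. -/
theorem Ah_bounds (h : ℝ → ℝ)
    (hpos : ∀ t ∈ Set.Ioo (0 : ℝ) 1, 0 < h t)
    (hdec : AntitoneOn h (Set.Icc 0 1))
    (hint : IntervalIntegrable h volume 0 1)
    (hext : ∀ t : ℝ, 1 ≤ t → h t = 0)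
    (r : ℝ) (hr0 : 0 ≤ r) (hr1 : r < 1) :
    ((2 * Real.pi)⁻¹ * ∫ t in (0 : ℝ)..(1 - r), h t) ≤ Ah h r ∧
    Ah h r ≤ ((2 + Real.pi) / Real.pi) * ∫ t in (0 : ℝ)..(1 - r), h t :=
  Ah_bounds_general h hdec hint hext r hr0 hr1
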